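/- Let q and u be real numbers with q > 1 and |u| < q. Then the infinite product ∏_{r≥1} (1 - u q^{-r})^{-1} converges, the series on the right converges absolutely, and ∏_{r≥1} (1 - u q^{-r})^{-1} = 1 + Σ_{n≥1} u^n / ( q^n (1 - q^{-1})(1 - q^{-2}) ⋯ (1 - q^{-n}) ). -/

import Mathlib

/-!
With `t = q⁻¹` and `x = u / q`, the right-hand side is the series
`E(x) = ∑ xⁿ / ((1 - t)(1 - t²)⋯(1 - tⁿ))`, which satisfies the functional equation
`E(t x) = (1 - x) E(x)`. Iterating it gives `∏_{r<N} (1 - x tʳ) · E(x) = E(x t^N)`, and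
`E(x t^N) → E(0) = 1` by dominated convergence. Hence `∏_{r≥0} (1 - x tʳ) = E(x)⁻¹`.
-/

open Filter Topology

namespace Euler

/-- The `q`-Pochhammer symbol `(t; t)ₙ = (1 - t)(1 - t²)⋯(1 - tⁿ)`. -/
def qPochhammer {R : Type*} [CommRing R] (t : R) (n : ℕ) : R :=
  ∏ i ∈ Finset.Icc 1 n, (1 - t ^ i)

section CommRing

variable {R : Type*} [CommRing R] (t : R)

@[simp]
lemma qPochhammer_zero : qPochhammer t 0 = 1 := by
  simp [qPochhammer]

lemma qPochhammer_succ (n : ℕ) : qPochhammer t (n + 1) = qPochhammer t n * (1 - t ^ (n + 1)) :=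
  Finset.prod_Icc_succ_top (by omega) _

end CommRing

variable {𝕜 : Type*} [NormedField 𝕜] {t x : 𝕜}

lemma one_sub_pow_ne_zero (ht : ‖t‖ < 1) {i : ℕ} (hi : i ≠ 0) : 1 - t ^ i ≠ 0 := by
  refine sub_ne_zero.2 fun h => ?_
  have : ‖t‖ ^ i < 1 := pow_lt_one₀ (norm_nonneg t) ht hi
  simp [← norm_pow, ← h] at this

lemma qPochhammer_ne_zero (ht : ‖t‖ < 1) (n : ℕ) : qPochhammer t n ≠ 0 :=
  Finset.prod_ne_zero_iff.2 fun i hi => one_sub_pow_ne_zero ht (by simp at hi; omega)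

lemma norm_mul_pow_le (ht : ‖t‖ ≤ 1) (x : 𝕜) (N : ℕ) : ‖x * t ^ N‖ ≤ ‖x‖ := by
  rw [norm_mul, norm_pow]
  exact mul_le_of_le_one_right (norm_nonneg x) (pow_le_one₀ (norm_nonneg t) ht)

lemma summable_norm_pow_div_qPochhammer (ht : ‖t‖ < 1) (hx : ‖x‖ < 1) :
    Summable fun n : ℕ => ‖x ^ n / qPochhammer t n‖ := by
  obtain ⟨r, hxr, hr1⟩ := exists_between hx
  refine summable_of_ratio_norm_eventually_le hr1 ?_
  have hlim : Tendsto (fun n : ℕ => r * ‖1 - t ^ (n + 1)‖) atTop (𝓝 r) := by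
    have := (tendsto_pow_atTop_nhds_zero_of_norm_lt_one ht).comp (tendsto_add_atTop_nat 1)
    simpa using ((tendsto_const_nhds (x := (1 : 𝕜))).sub this).norm.const_mul r
  filter_upwards [hlim.eventually_const_lt hxr] with n hn
  have h1 := norm_pos_iff.2 (one_sub_pow_ne_zero ht n.succ_ne_zero)
  simp only [norm_norm, norm_div, norm_pow, qPochhammer_succ, norm_mul, pow_succ ‖x‖ n]
  rw [mul_div_mul_comm, mul_comm r]
  exact mul_le_mul_of_nonneg_left ((div_le_iff₀ h1).2 hn.le) (by positivity)

variable [CompleteSpace 𝕜]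

noncomputable def eulerSeries (t x : 𝕜) : 𝕜 := ∑' n : ℕ, x ^ n / qPochhammer t n

lemma eulerSeries_functional_equation (ht : ‖t‖ < 1) (hx : ‖x‖ < 1) :
    eulerSeries t (x * t) = (1 - x) * eulerSeries t x := by
  set a : ℕ → 𝕜 := fun n => x ^ n / qPochhammer t n
  have ha : Summable a := (summable_norm_pow_div_qPochhammer ht hx).of_norm
  have hxt : ‖x * t‖ < 1 := by simpa using (norm_mul_pow_le ht.le x 1).trans_lt hx
  have hstep : ∀ n, (x * t) ^ (n + 1) / qPochhammer t (n + 1) = a (n + 1) - x * a n := by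
    intro n
    have hD := qPochhammer_ne_zero ht n
    have h1 := one_sub_pow_ne_zero ht n.succ_ne_zero
    simp only [a, qPochhammer_succ]
    field_simp
    ring
  calc eulerSeries t (x * t)
      = a 0 + ∑' n : ℕ, (a (n + 1) - x * a n) := by
        rw [eulerSeries, (summable_norm_pow_div_qPochhammer ht hxt).of_norm.tsum_eq_zero_add]
        simp [a, hstep]
    _ = (1 - x) * eulerSeries t x := by
        rw [((summable_nat_add_iff 1).2 ha).tsum_sub (ha.mul_left x), tsum_mul_left,
          ← add_sub_assoc, ← ha.tsum_eq_zero_add, eulerSeries]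
        ring

lemma prod_one_sub_mul_pow_mul_eulerSeries (ht : ‖t‖ < 1) (hx : ‖x‖ < 1) (N : ℕ) :
    (∏ r ∈ Finset.range N, (1 - x * t ^ r)) * eulerSeries t x = eulerSeries t (x * t ^ N) := by
  induction N with
  | zero => simp
  | succ N ih =>
    have hxN := (norm_mul_pow_le ht.le x N).trans_lt hx
    rw [Finset.prod_range_succ, mul_right_comm, ih, pow_succ, ← mul_assoc,
      eulerSeries_functional_equation ht hxN]
    ring

lemma tendsto_eulerSeries_mul_pow (ht : ‖t‖ < 1) (hx : ‖x‖ < 1) :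
    Tendsto (fun N : ℕ => eulerSeries t (x * t ^ N)) atTop (𝓝 1) := by
  have hE0 : ∑' n : ℕ, (0 : 𝕜) ^ n / qPochhammer t n = 1 := by
    rw [tsum_eq_single 0 fun n hn => by simp [hn]]
    simp
  rw [← hE0]
  refine tendsto_tsum_of_dominated_convergence (summable_norm_pow_div_qPochhammer ht hx)
    (fun n => ?_) (Eventually.of_forall fun N n => ?_)
  · have := tendsto_const_nhds (x := x).mul (tendsto_pow_atTop_nhds_zero_of_norm_lt_one ht)
    simpa using (this.pow n).div_const (qPochhammer t n)
  · simp only [norm_div, norm_pow]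
    gcongr
    exact norm_mul_pow_le ht.le x N

lemma multipliable_one_sub_mul_pow (ht : ‖t‖ < 1) (x : 𝕜) :
    Multipliable fun r : ℕ => 1 - x * t ^ r := by
  have hsum : Summable fun r : ℕ => ‖-(x * t ^ r)‖ := by
    simpa [norm_mul, norm_pow] using
      (summable_geometric_of_lt_one (norm_nonneg t) ht).mul_left ‖x‖
  simpa [sub_eq_add_neg] using multipliable_one_add_of_summable hsum

lemma tprod_one_sub_mul_pow_mul_eulerSeries (ht : ‖t‖ < 1) (hx : ‖x‖ < 1) :
    (∏' r : ℕ, (1 - x * t ^ r)) * eulerSeries t x = 1 := by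
  refine tendsto_nhds_unique ?_ (tendsto_eulerSeries_mul_pow ht hx)
  simp_rw [← prod_one_sub_mul_pow_mul_eulerSeries ht hx]
  exact (multipliable_one_sub_mul_pow ht x).hasProd.tendsto_prod_nat.mul_const _

theorem hasProd_inv_one_sub_mul_pow (ht : ‖t‖ < 1) (hx : ‖x‖ < 1) :
    HasProd (fun r : ℕ => (1 - x * t ^ r)⁻¹) (eulerSeries t x) := by
  have h := tprod_one_sub_mul_pow_mul_eulerSeries ht hx
  have hinv := (multipliable_one_sub_mul_pow ht x).hasProd.inv₀ (left_ne_zero_of_mul_eq_one h)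
  rwa [inv_eq_of_mul_eq_one_right h] at hinv

end Euler

open Euler in
/-- **Lemma 3.3(ii) (Euler's identity)**: for real `q > 1` and `|u| < q`, the infinite
product `∏_{r≥1} (1-u q^{-r})^{-1}` converges, the series
`Σ_{n≥1} u^n/(q^n (1-q^{-1})⋯(1-q^{-n}))` converges absolutely, and
`∏_{r≥1} (1-u q^{-r})^{-1} = 1 + Σ_{n≥1} u^n/(q^n (1-q^{-1})⋯(1-q^{-n}))`. -/
theorem euler_prod_eq_sum (q u : ℝ) (hq : 1 < q) (hu : |u| < q) :
    Multipliable (fun r : ℕ => (1 - u / q ^ (r + 1))⁻¹) ∧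
    Summable (fun n : ℕ =>
      |u ^ (n + 1) / (q ^ (n + 1) * ∏ i ∈ Finset.Icc 1 (n + 1), (1 - 1 / q ^ i))|) ∧
    (∏' r : ℕ, (1 - u / q ^ (r + 1))⁻¹)
      = 1 + ∑' n : ℕ,
          u ^ (n + 1) / (q ^ (n + 1) * ∏ i ∈ Finset.Icc 1 (n + 1), (1 - 1 / q ^ i)) := by
  have hq0 : 0 < q := by linarith
  have ht : ‖1 / q‖ < 1 := by
    rw [Real.norm_of_nonneg (by positivity), div_lt_one hq0]
    exact hq
  have hx : ‖u / q‖ < 1 := by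
    rw [norm_div, Real.norm_eq_abs, Real.norm_of_nonneg hq0.le, div_lt_one hq0]
    exact hu
  have hfactor (r : ℕ) : u / q ^ (r + 1) = u / q * (1 / q) ^ r := by
    rw [div_pow, one_pow, div_mul_div_comm, mul_one, ← pow_succ']
  have hterm (n : ℕ) :
      u ^ (n + 1) / (q ^ (n + 1) * ∏ i ∈ Finset.Icc 1 (n + 1), (1 - 1 / q ^ i)) =
        (u / q) ^ (n + 1) / qPochhammer (1 / q) (n + 1) := by
    simp only [qPochhammer, div_pow, one_pow, div_div]
  simp_rw [hfactor, hterm]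
  have hprod := hasProd_inv_one_sub_mul_pow ht hx
  have hsum := summable_norm_pow_div_qPochhammer ht hx
  simp only [Real.norm_eq_abs] at hsum
  refine ⟨hprod.multipliable, (summable_nat_add_iff 1).2 hsum, ?_⟩
  rw [hprod.tprod_eq, eulerSeries, hsum.of_abs.tsum_eq_zero_add, pow_zero, qPochhammer_zero,
    div_one]
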